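/- Let G be a connected graph with n ≥ 2 vertices and let G ⊙ K_2 be its corona product with K_2, where v_1^{(i)}, v_2^{(i)} are the two vertices of the i-th copy of K_2. Then the family {{v_1^{(1)}, v_2^{(1)}}, ..., {v_1^{(n)}, v_2^{(n)}}} is a pairing resolving set of G ⊙ K_2. -/
import Mathlib


open SimpleGraph

/-- Path graph on `Fin n` with `i` adjacent to `i+1`. -/
def pathG (n : ℕ) : SimpleGraph (Fin n) :=
  SimpleGraph.fromRel (fun i j => (i : ℕ) + 1 = (j : ℕ))

/-- Cycle graph on `Fin n` (vertices in cyclic order). -/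
def cycleG (n : ℕ) : SimpleGraph (Fin n) :=
  SimpleGraph.fromRel (fun i j => (i : ℕ) + 1 = (j : ℕ) ∨ ((i : ℕ) = n - 1 ∧ (j : ℕ) = 0))

/-- `S` is a resolving set of `G`. -/
def resolvingSet {V : Type*} (G : SimpleGraph V) (S : Set V) : Prop :=
  ∀ x y : V, x ≠ y → ∃ z ∈ S, G.dist x z ≠ G.dist y z

/-- `S` is a locating set of `G`. -/
def locatingSet {V : Type*} (G : SimpleGraph V) (S : Set V) : Prop :=
  ∀ u v : V, u ∉ S → v ∉ S → u ≠ v → G.neighborSet u ∩ S ≠ G.neighborSet v ∩ S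

/-- `S` is a strictly locating set of `G`. -/
def strictlyLocatingSet {V : Type*} (G : SimpleGraph V) (S : Set V) : Prop :=
  locatingSet G S ∧ ∀ u : V, u ∉ S → G.neighborSet u ∩ S ≠ S

/-- Corona product `G ⊙ H`: vertex `Sum.inl a` is a vertex of `G`, and
`Sum.inr (i, h)` is the vertex `h` of the `i`-th copy of `H`. -/
def corona {α β : Type*} (G : SimpleGraph α) (H : SimpleGraph β) :
    SimpleGraph (α ⊕ α × β) :=
  SimpleGraph.fromRel (fun x y =>
    match x, y with
    | Sum.inl a, Sum.inl b => G.Adj a b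
    | Sum.inl a, Sum.inr p => a = p.1
    | Sum.inr p, Sum.inr q => p.1 = q.1 ∧ H.Adj p.2 q.2
    | _, _ => False)

/-- `K₁ ⊙ H`: the graph `H` together with one universal vertex `none`. -/
def cone {β : Type*} (H : SimpleGraph β) : SimpleGraph (Option β) :=
  SimpleGraph.fromRel (fun x y =>
    match x, y with
    | some a, some b => H.Adj a b
    | none, some _ => True
    | _, _ => False)

section coronaAux

open Sum

variable {α : Type*} (G : SimpleGraph α)

lemma corona_adj_ll {a c : α} :
    (corona G (⊤ : SimpleGraph (Fin 2))).Adj (inl a) (inl c) ↔ G.Adj a c := by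
  simp only [corona, fromRel_adj]
  constructor
  · rintro ⟨-, h | h⟩
    · exact h
    · exact h.symm
  · exact fun h => ⟨by simpa using h.ne, Or.inl h⟩

lemma corona_adj_lr {a : α} {p : α × Fin 2} :
    (corona G (⊤ : SimpleGraph (Fin 2))).Adj (inl a) (inr p) ↔ a = p.1 := by
  simp only [corona, fromRel_adj]
  constructor
  · rintro ⟨-, h | h⟩
    · exact h
    · exact h.elim
  · exact fun h => ⟨by simp, Or.inl h⟩

lemma corona_adj_rr {p q : α × Fin 2} :
    (corona G (⊤ : SimpleGraph (Fin 2))).Adj (inr p) (inr q) ↔ p.1 = q.1 ∧ p.2 ≠ q.2 := by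
  simp only [corona, fromRel_adj, top_adj]
  constructor
  · rintro ⟨-, ⟨h1, h2⟩ | ⟨h1, h2⟩⟩
    · exact ⟨h1, h2⟩
    · exact ⟨h1.symm, h2.symm⟩
  · rintro ⟨h1, h2⟩
    refine ⟨?_, Or.inl ⟨h1, h2⟩⟩
    simp only [ne_eq, inr.injEq]
    rintro rfl
    exact h2 rfl

/-- The embedding of `G` into the corona. -/
def coronaHom : G →g corona G (⊤ : SimpleGraph (Fin 2)) where
  toFun := inl
  map_rel' := fun h => (corona_adj_ll G).mpr h

lemma corona_connected (hG : G.Connected) :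
    (corona G (⊤ : SimpleGraph (Fin 2))).Connected := by
  have hl : ∀ a c : α, (corona G (⊤ : SimpleGraph (Fin 2))).Reachable (inl a) (inl c) :=
    fun a c => (hG.preconnected a c).map (coronaHom G)
  have hr : ∀ p : α × Fin 2,
      (corona G (⊤ : SimpleGraph (Fin 2))).Reachable (inl p.1) (inr p) :=
    fun p => ((corona_adj_lr G).mpr rfl).reachable
  rw [connected_iff]
  refine ⟨?_, ⟨inl hG.nonempty.some⟩⟩
  rintro (a | p) (c | q)
  · exact hl a c
  · exact (hl a q.1).trans (hr q)
  · exact ((hr p).symm).trans (hl p.1 c)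
  · exact ((hr p).symm).trans ((hl p.1 q.1).trans (hr q))

lemma no_short_walk {V : Type*} {C : SimpleGraph V} {y z : V}
    (h0 : y ≠ z) (h1 : ¬ C.Adj y z) (h2 : ∀ m, C.Adj y m → ¬ C.Adj m z)
    (p : C.Walk y z) : 2 < p.length := by
  cases p with
  | nil => exact absurd rfl h0
  | cons h q =>
    cases q with
    | nil => exact absurd h h1
    | cons h' q' =>
      cases q' with
      | nil => exact absurd h' (h2 _ h)
      | cons _ _ => simp only [Walk.length_cons]; omega

lemma two_lt_dist {V : Type*} {C : SimpleGraph V} (hc : C.Connected) {y z : V}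
    (h0 : y ≠ z) (h1 : ¬ C.Adj y z) (h2 : ∀ m, C.Adj y m → ¬ C.Adj m z) :
    2 < C.dist y z := by
  obtain ⟨p, hp⟩ := exists_walk_of_dist_ne_zero
    (fun h => h0 (hc.dist_eq_zero_iff.mp h))
  rw [← hp]
  exact no_short_walk h0 h1 h2 p

lemma fin2_aux : ∀ x y z : Fin 2, x ≠ y → ¬ x = z → y = z := by decide

end coronaAux

open Sum in
theorem stmt9 {α : Type*} [Fintype α] (G : SimpleGraph α) (hG : G.Connected)
    (hcard : 2 ≤ Fintype.card α) (b : α → Fin 2) :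
    resolvingSet (corona G (⊤ : SimpleGraph (Fin 2)))
      (Set.range fun i : α => (Sum.inr (i, b i) : α ⊕ α × Fin 2)) := by
  set C := corona G (⊤ : SimpleGraph (Fin 2)) with hCdef
  have hconn : C.Connected := corona_connected G hG
  have hnbr : ∀ a : α, ∃ k, G.Adj a k := by
    intro a
    obtain ⟨k, hk⟩ := Fintype.exists_ne_of_one_lt_card (by omega) a
    obtain ⟨p⟩ := hG.preconnected a k
    cases p with
    | nil => exact absurd rfl hk
    | cons h _ => exact ⟨_, h⟩
  have dlr : ∀ (a : α) (h : Fin 2), C.dist (inl a) (inr (a, h)) = 1 := by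
    intro a h
    exact dist_eq_one_iff_adj.mpr ((corona_adj_lr G).mpr rfl)
  have drr : ∀ (i : α) (h h' : Fin 2), h ≠ h' → C.dist (inr (i, h)) (inr (i, h')) = 1 := by
    intro i h h' hne
    exact dist_eq_one_iff_adj.mpr ((corona_adj_rr G).mpr ⟨rfl, hne⟩)
  -- the mixed case
  have hmix : ∀ (a : α) (p : α × Fin 2),
      ∃ z ∈ (Set.range fun i : α => (Sum.inr (i, b i) : α ⊕ α × Fin 2)),
        C.dist (inl a) z ≠ C.dist (inr p) z := by
    intro a p
    obtain ⟨j, h⟩ := p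
    by_cases haj : a = j
    · subst haj
      by_cases hb : h = b a
      · subst hb
        refine ⟨inr (a, b a), ⟨a, by rfl⟩, ?_⟩
        have e0 : C.dist (inr (a, b a)) (inr (a, b a)) = 0 := hconn.dist_eq_zero_iff.mpr rfl
        rw [dlr a (b a), e0]
        omega
      · obtain ⟨k, hk⟩ := hnbr a
        refine ⟨inr (k, b k), ⟨k, rfl⟩, ?_⟩
        have hx2 : C.dist (inl a) (inr (k, b k)) = 2 := by
          have hle : C.dist (inl a) (inr (k, b k)) ≤ 2 := by
            calc C.dist (inl a) (inr (k, b k))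
                ≤ (Walk.cons ((corona_adj_ll G).mpr hk)
                    (Walk.cons ((corona_adj_lr G).mpr rfl) (Walk.nil : C.Walk (inr (k, b k)) (inr (k, b k))))).length :=
                  dist_le _
              _ = 2 := by simp
          have h0 : C.dist (inl a) (inr (k, b k)) ≠ 0 :=
            fun hcc => by simpa using hconn.dist_eq_zero_iff.mp hcc
          have h1 : C.dist (inl a) (inr (k, b k)) ≠ 1 := by
            intro hcc
            exact hk.ne ((corona_adj_lr G).mp (dist_eq_one_iff_adj.mp hcc))
          omega
        have hy3 : 2 < C.dist (inr (a, h)) (inr (k, b k)) := by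
          refine two_lt_dist hconn ?_ ?_ ?_
          · simp only [ne_eq, inr.injEq, Prod.mk.injEq, not_and]
            rintro rfl
            exact absurd rfl hk.ne
          · intro hadj
            exact hk.ne ((corona_adj_rr G).mp hadj).1
          · rintro (c | q) h1 h2
            · have hc1 : c = a := (corona_adj_lr G).mp h1.symm
              have hc2 : c = k := (corona_adj_lr G).mp h2
              exact hk.ne (hc1 ▸ hc2)
            · have hq1 : a = q.1 := ((corona_adj_rr G).mp h1).1
              have hq2 : q.1 = k := ((corona_adj_rr G).mp h2).1
              exact hk.ne (hq1.trans hq2)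
        omega
    · refine ⟨inr (a, b a), ⟨a, rfl⟩, ?_⟩
      rw [dlr a (b a)]
      intro hcon
      have := dist_eq_one_iff_adj.mp hcon.symm
      exact haj ((corona_adj_rr G).mp this).1.symm
  rintro (a | ⟨i, h⟩) (c | ⟨j, h'⟩) hxy
  · -- inl / inl
    have hac : a ≠ c := fun hec => hxy (hec ▸ rfl)
    refine ⟨inr (a, b a), ⟨a, rfl⟩, ?_⟩
    rw [dlr a (b a)]
    intro hcon
    have := dist_eq_one_iff_adj.mp hcon.symm
    exact hac ((corona_adj_lr G).mp this).symm
  · exact hmix a (j, h')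
  · obtain ⟨z, hz, hne⟩ := hmix c (i, h)
    exact ⟨z, hz, hne.symm⟩
  · -- inr / inr
    by_cases hij : i = j
    · subst hij
      have hh : h ≠ h' := by
        intro e
        exact hxy (by rw [e])
      by_cases hb : h = b i
      · subst hb
        refine ⟨inr (i, b i), ⟨i, by rfl⟩, ?_⟩
        have e0 : C.dist (inr (i, b i)) (inr (i, b i)) = 0 := hconn.dist_eq_zero_iff.mpr rfl
        rw [e0, drr i h' (b i) hh.symm]
        omega
      · have hb' : h' = b i := fin2_aux h h' (b i) hh hb
        subst hb'
        refine ⟨inr (i, b i), ⟨i, by rfl⟩, ?_⟩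
        have e0 : C.dist (inr (i, b i)) (inr (i, b i)) = 0 := hconn.dist_eq_zero_iff.mpr rfl
        rw [e0, drr i h (b i) hh]
        omega
    · refine ⟨inr (i, b i), ⟨i, rfl⟩, ?_⟩
      have hx1 : C.dist (inr (i, h)) (inr (i, b i)) ≤ 1 := by
        by_cases hb : h = b i
        · subst hb
          have e0 : C.dist (inr (i, b i)) (inr (i, b i)) = 0 := hconn.dist_eq_zero_iff.mpr rfl
          omega
        · rw [drr i h (b i) hb]
      have hy3 : 2 < C.dist (inr (j, h')) (inr (i, b i)) := by
        refine two_lt_dist hconn ?_ ?_ ?_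
        · simp only [ne_eq, inr.injEq, Prod.mk.injEq, not_and]
          rintro rfl
          exact absurd rfl hij
        · intro hadj
          exact hij ((corona_adj_rr G).mp hadj).1.symm
        · rintro (c | q) h1 h2
          · have hc1 : c = j := (corona_adj_lr G).mp h1.symm
            have hc2 : c = i := (corona_adj_lr G).mp h2
            exact hij (hc2.symm.trans hc1)
          · have hq1 : j = q.1 := ((corona_adj_rr G).mp h1).1
            have hq2 : q.1 = i := ((corona_adj_rr G).mp h2).1
            exact hij (hq2 ▸ hq1).symm
      omega
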